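/- Let M be a MAG whose edge-induced subgraph over the undirected edges is chordal. Then every induced subgraph of M (on any nonempty vertex subset) contains at least one removable vertex. -/

import Mathlib

/-- A mixed graph with directed (`dir x y` : x → y), bidirected and undirected edges. -/
structure MixedGraph (V : Type*) where
  dir : V → V → Prop
  bi : V → V → Prop
  und : V → V → Prop
  bi_symm : ∀ x y, bi x y → bi y x
  und_symm : ∀ x y, und x y → und y x

namespace MixedGraph

variable {V : Type*}

def adj (G : MixedGraph V) (x y : V) : Prop :=
  G.dir x y ∨ G.dir y x ∨ G.bi x y ∨ G.und x y

/-- There is an arrowhead at `y` on the edge between `x` and `y`. -/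
def head (G : MixedGraph V) (x y : V) : Prop := G.dir x y ∨ G.bi x y

def pa (G : MixedGraph V) (x : V) : Set V := {y | G.dir y x}
def child (G : MixedGraph V) (x : V) : Set V := {y | G.dir x y}
def nbr (G : MixedGraph V) (x : V) : Set V := {y | G.und x y}
def spouse (G : MixedGraph V) (x : V) : Set V := {y | G.bi x y}

/-- `x` is an ancestor of `y` (every vertex is an ancestor of itself). -/
def anc (G : MixedGraph V) (x y : V) : Prop := Relation.ReflTransGen G.dir x y

def ancSet (G : MixedGraph V) (S : Set V) : Set V := {x | ∃ y ∈ S, G.anc x y}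

/-- The set of descendants of `x` (including `x` itself). -/
def desc (G : MixedGraph V) (x : V) : Set V := {y | G.anc x y}

/-- A path, encoded as a duplicate-free list of at least two vertices with
consecutive vertices adjacent. -/
def IsPath (G : MixedGraph V) (p : List V) : Prop :=
  p.Chain' G.adj ∧ p.Nodup ∧ 2 ≤ p.length

def IsPathBetween (G : MixedGraph V) (p : List V) (x y : V) : Prop :=
  G.IsPath p ∧ p.head? = some x ∧ p.getLast? = some y

/-- The vertex at (internal) position `i` of `p` is a collider: both incident
path edges have an arrowhead at it. -/
def ColliderAt (G : MixedGraph V) (p : List V) (i : ℕ) : Prop :=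
  ∃ a v c, p[i-1]? = some a ∧ p[i]? = some v ∧ p[i+1]? = some c ∧
    G.head a v ∧ G.head c v

/-- A collider path: every non-endpoint vertex is a collider. -/
def IsColliderPath (G : MixedGraph V) (p : List V) : Prop :=
  G.IsPath p ∧ ∀ i, 1 ≤ i → i + 1 < p.length → G.ColliderAt p i

/-- `p` is an m-connecting path between `x` and `y` relative to `Z`. -/
def MConn (G : MixedGraph V) (p : List V) (x y : V) (Z : Set V) : Prop :=
  G.IsPathBetween p x y ∧
  ∀ i v, 1 ≤ i → i + 1 < p.length → p[i]? = some v →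
    (G.ColliderAt p i → v ∈ G.ancSet ({x, y} ∪ Z)) ∧
    (¬ G.ColliderAt p i → v ∉ Z)

/-- `Z` m-separates `x` and `y` in `G`. -/
def MSep (G : MixedGraph V) (x y : V) (Z : Set V) : Prop :=
  ∀ p, ¬ G.MConn p x y Z

/-- Induced subgraph over a set `S` of vertices. -/
def induce (G : MixedGraph V) (S : Set V) : MixedGraph V where
  dir x y := G.dir x y ∧ x ∈ S ∧ y ∈ S
  bi x y := G.bi x y ∧ x ∈ S ∧ y ∈ S
  und x y := G.und x y ∧ x ∈ S ∧ y ∈ S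
  bi_symm := fun x y h => ⟨G.bi_symm x y h.1, h.2.2, h.2.1⟩
  und_symm := fun x y h => ⟨G.und_symm x y h.1, h.2.2, h.2.1⟩

/-- `X` is removable in `G`: the induced subgraph on the remaining vertices
imposes exactly the same m-separation relations over them as `G`. -/
def Removable (G : MixedGraph V) (X : V) : Prop :=
  ∀ Y W : V, Y ≠ X → W ≠ X → Y ≠ W →
    ∀ Z : Set V, Z ⊆ {v | v ≠ X ∧ v ≠ Y ∧ v ≠ W} →
      (G.MSep Y W Z ↔ (G.induce {v | v ≠ X}).MSep Y W Z)

/-- Ancestral: no directed cycles, no almost directed cycles, and endpoints of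
undirected edges have no parents or spouses. -/
def Ancestral (G : MixedGraph V) : Prop :=
  (∀ x y, G.dir x y → ¬ G.anc y x) ∧
  (∀ x y, G.bi x y → ¬ G.anc y x) ∧
  (∀ x y, G.und x y → ∀ z, ¬ G.dir z x ∧ ¬ G.bi z x)

/-- A maximal ancestral graph: ancestral, and any two non-adjacent vertices are
m-separated by some set. -/
def IsMAG (G : MixedGraph V) : Prop :=
  G.Ancestral ∧
  ∀ x y, x ≠ y → ¬ G.adj x y →
    ∃ Z : Set V, Z ⊆ {v | v ≠ x ∧ v ≠ y} ∧ G.MSep x y Z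

/-- Markov boundary of `x`: the vertices with a collider path to `x`. -/
def Mb (G : MixedGraph V) (x : V) : Set V :=
  {y | ∃ p, G.IsColliderPath p ∧ p.head? = some y ∧ p.getLast? = some x}

/-- District of `x`: vertices joined to `x` by a path of bidirected edges. -/
def district (G : MixedGraph V) (x : V) : Set V :=
  {y | Relation.ReflTransGen G.bi x y}

/-- `Pa⁺(x) = Pa(x) ∪ Dis(x) ∪ Pa(Dis(x)) ∪ N(x)`. -/
def paPlus (G : MixedGraph V) (x : V) : Set V :=
  G.pa x ∪ G.district x ∪ (⋃ y ∈ G.district x, G.pa y) ∪ G.nbr x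

noncomputable def deltaPlus [Fintype V] (G : MixedGraph V) : ℕ :=
  Finset.univ.sup fun z : V => (G.paPlus z).ncard

/-- Condition 1 of the graphical characterization of removability. -/
def RemCond1 (G : MixedGraph V) (X : V) : Prop :=
  ∀ Y Z : V, G.adj X Y → Z ∈ G.child X ∪ G.nbr X → Z ≠ Y → G.adj Y Z

/-- Condition 2 of the graphical characterization of removability. -/
def RemCond2 (G : MixedGraph V) (X : V) : Prop :=
  ∀ (p : List V) (Y Z : V), G.IsColliderPath p → p.head? = some X →
    p.getLast? = some Y → Z ∉ p → (∀ v ∈ p.dropLast, G.dir v Z) → G.adj Y Z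

end MixedGraph

namespace MixedGraph

/-- The edge-induced subgraph over the undirected edges is chordal: every
cycle of length ≥ 4 made of undirected edges has a chord (an undirected edge
between two non-consecutive vertices of the cycle). -/
def UndChordal {V : Type*} (G : MixedGraph V) : Prop :=
  ∀ p : List V, 4 ≤ p.length → p.Chain' G.und → p.Nodup →
    (∀ a b, p.head? = some a → p.getLast? = some b → G.und b a) →
    ∃ i j a b, i + 2 ≤ j ∧ j < p.length ∧ ¬ (i = 0 ∧ j + 1 = p.length) ∧
      p[i]? = some a ∧ p[j]? = some b ∧ G.und a b

end MixedGraph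

/-! If the induced subgraph has an arrowhead, acyclicity gives a vertex `x` with an arrowhead
and no children. By ancestrality `x` has no undirected edge, so every edge at `x` has an
arrowhead at `x`: on a path between two other vertices `x` would be a collider that is an
ancestor of nothing but itself, so no m-connecting path uses `x`, and removing it changes
no m-separation.

Otherwise the induced subgraph is an undirected chordal graph, which by Dirac's lemma has a
simplicial vertex `x`; an m-connecting path through `x` can be shortcut across the edge
between the two neighbours of `x` on it. Dirac's lemma is proved by induction: for
non-adjacent `a` and `b`, the vertices `C` adjacent to `a` and to the component `B` of `b`
outside the closed neighbourhood of `a` form a clique (two non-adjacent ones would close a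
chordless cycle through `a` and a shortest path across `B`), and a simplicial vertex of
`B ∪ C` that lies outside `C` is simplicial in the whole graph. -/

namespace List

variable {α : Type*} {r : α → α → Prop}

def IsChordless (r : α → α → Prop) (l : List α) : Prop :=
  ∀ i j a b, i + 2 ≤ j → l[i]? = some a → l[j]? = some b → ¬ r a b

theorem Nodup.exists_internal_getElem?_iff {l : List α} (hl : l.Nodup) {y w v : α}
    (hy : l.head? = some y) (hw : l.getLast? = some w) :
    (∃ i, 1 ≤ i ∧ i + 1 < l.length ∧ l[i]? = some v) ↔ v ∈ l ∧ v ≠ y ∧ v ≠ w := by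
  rw [head?_eq_getElem?] at hy
  rw [getLast?_eq_getElem?] at hw
  have hlen : 0 < l.length := (getElem?_eq_some_iff.1 hy).1
  constructor
  · rintro ⟨i, h1, h2, hv⟩
    refine ⟨mem_iff_getElem?.2 ⟨i, hv⟩, fun h => ?_, fun h => ?_⟩
    · have := (getElem?_inj (by omega) hl).1 (hv.trans (h ▸ hy).symm)
      omega
    · have := (getElem?_inj (by omega) hl).1 (hv.trans (h ▸ hw).symm)
      omega
  · rintro ⟨hv, hvy, hvw⟩
    obtain ⟨i, hi⟩ := mem_iff_getElem?.1 hv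
    have hil : i < l.length := (getElem?_eq_some_iff.1 hi).1
    refine ⟨i, ?_, ?_, hi⟩
    · by_contra h
      rw [show i = 0 by omega, hy] at hi
      exact hvy (Option.some.inj hi).symm
    · by_contra h
      rw [show i = l.length - 1 by omega, hw] at hi
      exact hvw (Option.some.inj hi).symm

theorem exists_eq_append_cons_append_cons_of_not_nodup {l : List α} (h : ¬ l.Nodup) :
    ∃ l₁ a l₂ l₃, l = l₁ ++ a :: (l₂ ++ a :: l₃) := by
  induction l with
  | nil => simp at h
  | cons b l ih =>
    by_cases hb : b ∈ l
    · obtain ⟨l₂, l₃, rfl⟩ := append_of_mem hb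
      exact ⟨[], b, l₂, l₃, rfl⟩
    · obtain ⟨l₁, a, l₂, l₃, rfl⟩ := ih fun hn => h (nodup_cons.2 ⟨hb, hn⟩)
      exact ⟨b :: l₁, a, l₂, l₃, rfl⟩

theorem IsChain.splice {l₁ l₂ l₃ : List α} {a : α} (h : (l₁ ++ a :: (l₂ ++ a :: l₃)).IsChain r) :
    (l₁ ++ a :: l₃).IsChain r := by
  rw [isChain_append] at h ⊢
  refine ⟨h.1, by simpa using h.2.1.drop (l₂.length + 1), fun x hx y hy => h.2.2 x hx y ?_⟩
  simpa using hy

theorem IsChain.take_append_drop {l : List α} (hl : l.IsChain r) {i k : ℕ} {a b : α}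
    (ha : l[i]? = some a) (hb : l[k]? = some b) (h : r a b) :
    (l.take (i + 1) ++ l.drop k).IsChain r := by
  rw [isChain_append]
  refine ⟨hl.take _, hl.drop _, fun x hx y hy => ?_⟩
  simp only [getLast?_take, Option.mem_def] at hx
  simp only [head?_drop, hb, Option.mem_def] at hy
  simp_all

/-- Shortcutting a chord or a repeated vertex shortens the chain, so a shortest one is a
chordless path. -/
theorem IsChain.exists_sublist_isChordless {l : List α} (hl : l.IsChain r) :
    ∃ l', l' <+ l ∧ l'.IsChain r ∧ l'.head? = l.head? ∧ l'.getLast? = l.getLast? ∧ l'.Nodup ∧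
      l'.IsChordless r := by
  induction hn : l.length using Nat.strong_induction_on generalizing l with
  | _ n ih =>
  have shorten : ∀ l', l' <+ l → l'.length < l.length → l'.IsChain r → l'.head? = l.head? →
      l'.getLast? = l.getLast? → ∃ l'', l'' <+ l ∧ l''.IsChain r ∧ l''.head? = l.head? ∧
        l''.getLast? = l.getLast? ∧ l''.Nodup ∧ l''.IsChordless r := by
    intro l' hsub hlt hc hh hlast
    obtain ⟨l'', hsub', hc', hh', hlast', hnd', hcl'⟩ := ih _ (hn ▸ hlt) hc rfl
    exact ⟨l'', hsub'.trans hsub, hc', hh'.trans hh, hlast'.trans hlast, hnd', hcl'⟩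
  by_cases hnd : l.Nodup
  · by_cases hcl : l.IsChordless r
    · exact ⟨l, Sublist.refl _, hl, rfl, rfl, hnd, hcl⟩
    simp only [IsChordless, not_forall, not_not] at hcl
    obtain ⟨i, k, a, b, hik, ha, hb, hab⟩ := hcl
    have hk : k < l.length := (getElem?_eq_some_iff.1 hb).1
    refine shorten _ ?_ ?_ (hl.take_append_drop ha hb hab) ?_ ?_
    · conv_rhs => rw [← List.take_append_drop (i + 1) l]
      exact (drop_sublist_drop_left _ (by omega)).append_left _
    · simp only [length_append, length_take, length_drop]
      omega
    · have hl : l ≠ [] := ne_nil_of_length_pos (by omega)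
      rw [head?_append_of_ne_nil _ (by simpa using hl), head?_take]
      simp
    · rw [getLast?_append_of_ne_nil _ (by simpa using hk), getLast?_drop, if_neg (by omega)]
  · obtain ⟨l₁, a, l₂, l₃, rfl⟩ := exists_eq_append_cons_append_cons_of_not_nodup hnd
    refine shorten _ (by simp) (by simp) hl.splice (by cases l₁ <;> simp) ?_
    rw [getLast?_append_of_ne_nil _ (cons_ne_nil _ _),
      getLast?_append_of_ne_nil _ (cons_ne_nil _ _)]
    simp [getLast?_cons]

end List

namespace MixedGraph

open List

variable {V : Type*} {G : MixedGraph V}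

instance (G : MixedGraph V) : Std.Symm G.und := ⟨G.und_symm⟩

def IsSimplicialIn (G : MixedGraph V) (S : Set V) (x : V) : Prop :=
  {a ∈ S | G.und x a}.Pairwise G.und

theorem IsSimplicialIn.mono {S T : Set V} {x : V} (hx : G.IsSimplicialIn T x)
    (hST : ∀ a ∈ S, G.und x a → a ∈ T) : G.IsSimplicialIn S x := by
  refine Set.Pairwise.mono ?_ hx
  rintro a ⟨haS, hxa⟩
  exact ⟨hST a haS hxa, hxa⟩

theorem IsSimplicialIn.induce {S : Set V} {x : V} (hx : G.IsSimplicialIn S x) :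
    (G.induce S).IsSimplicialIn Set.univ x := by
  rintro a ⟨-, hxa, -, haS⟩ c ⟨-, hxc, -, hcS⟩ hac
  exact ⟨hx ⟨haS, hxa⟩ ⟨hcS, hxc⟩ hac, haS, hcS⟩

/-- The chordless cycle `a, v, …, w` would contradict chordality. -/
theorem UndChordal.und_of_isChain (hG : G.UndChordal) {a v w : V} {q : List V}
    (hq : q.IsChain G.und) (hv : q.head? = some v) (hw : q.getLast? = some w) (hvw : v ≠ w)
    (hav : G.und a v) (haw : G.und a w) (hva : v ≠ a) (hwa : w ≠ a)
    (hint : ∀ x ∈ q, x ≠ v → x ≠ w → x ≠ a ∧ ¬ G.und a x) : G.und v w := by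
  by_contra hnvw
  obtain ⟨q, hsub, hc, hh, hl, hnd, hcl⟩ := hq.exists_sublist_isChordless
  rw [hv] at hh
  rw [hw] at hl
  have hint : ∀ x ∈ q, x ≠ v → x ≠ w → x ≠ a ∧ ¬ G.und a x := fun x hx => hint x (hsub.subset hx)
  have hlen : 3 ≤ q.length := by
    match q, hc, hh, hl with
    | [_], _, hh, hl => exact absurd (Option.some.inj (hh.symm.trans hl)) hvw
    | [_, _], hc, hh, hl =>
      cases Option.some.inj hh
      cases Option.some.inj hl
      exact absurd (isChain_pair.1 hc) hnvw
    | _ :: _ :: _ :: _, _, _, _ => simp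
  have haq : a ∉ q := fun h => (hint a h hva.symm hwa.symm).1 rfl
  have hcyc : (a :: q).IsChain G.und := isChain_cons.2 ⟨by simpa [hh] using hav, hc⟩
  have hwrap : ∀ x y, (a :: q).head? = some x → (a :: q).getLast? = some y → G.und y x := by
    intro x y hx hy
    rw [getLast?_cons, hl] at hy
    simp only [head?_cons, Option.some.injEq, Option.getD_some] at hx hy
    exact hx ▸ hy ▸ symm haw
  obtain ⟨i, j, α, β, hij, hj, hexc, hα, hβ, hαβ⟩ :=
    hG (a :: q) (by rw [length_cons]; omega) hcyc (nodup_cons.2 ⟨haq, hnd⟩) hwrap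
  obtain ⟨j, rfl⟩ : ∃ j', j = j' + 1 := ⟨j - 1, by omega⟩
  rw [getElem?_cons_succ] at hβ
  rcases i with _ | i
  · -- the chord would join `a` to an interior vertex of the path
    simp only [getElem?_cons_zero, Option.some.injEq] at hα
    simp only [length_cons, true_and] at hj hexc
    obtain ⟨hβq, hβv, hβw⟩ :=
      (hnd.exists_internal_getElem?_iff hh hl).1 ⟨j, by omega, by omega, hβ⟩
    exact (hint β hβq hβv hβw).2 (hα ▸ hαβ)
  · rw [getElem?_cons_succ] at hα
    exact hcl i j α β (by omega) hα hβ hαβ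

theorem UndChordal.und_of_reflTransGen (hG : G.UndChordal) {a v w s t : V} {R : Set V}
    (hR : ∀ x ∈ R, x ≠ a ∧ ¬ G.und a x) (hav : G.und a v) (haw : G.und a w) (hva : v ≠ a)
    (hwa : w ≠ a) (hvw : v ≠ w) (hvs : G.und v s) (htw : G.und t w) (hs : s ∈ R)
    (hst : Relation.ReflTransGen (G.induce R).und s t) : G.und v w := by
  obtain ⟨l, hl, hlast⟩ := exists_isChain_cons_of_relationReflTransGen hst
  have hlR : ∀ x ∈ s :: l, x ∈ R := hl.induction _ _ (fun _ _ h _ => h.2.2) (fun _ => hs)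
  refine hG.und_of_isChain (q := v :: (s :: l ++ [w])) ?_ rfl
    (by rw [← cons_append, getLast?_concat]) hvw hav haw hva hwa ?_
  · refine isChain_cons.2 ⟨by simpa using hvs, isChain_append.2 ⟨hl.imp fun _ _ h => h.1,
      isChain_singleton _, fun x hx y hy => ?_⟩⟩
    rw [getLast?_eq_some_getLast (cons_ne_nil _ _), hlast, Option.mem_some_iff] at hx
    simp only [head?_cons, Option.mem_some_iff] at hy
    exact hx ▸ hy ▸ htw
  · intro x hx hxv hxw
    simp only [mem_cons, mem_append, not_mem_nil, or_false] at hx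
    rcases hx with rfl | (rfl | hx) | rfl
    exacts [absurd rfl hxv, hR _ hs, hR x (hlR x (mem_cons_of_mem _ hx)), absurd rfl hxw]

theorem exists_isSimplicialIn_not_mem {T C : Set V}
    (hT : ∀ a ∈ T, ∀ b ∈ T, a ≠ b → ¬ G.und a b →
      ∃ z ∈ T, z ≠ a ∧ ¬ G.und a z ∧ G.IsSimplicialIn T z)
    (hC : C.Pairwise G.und) {b : V} (hb : b ∈ T) (hbC : b ∉ C) :
    ∃ z ∈ T, z ∉ C ∧ G.IsSimplicialIn T z := by
  by_cases hcomp : T.Pairwise G.und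
  · exact ⟨b, hb, hbC, hcomp.mono (Set.sep_subset _ _)⟩
  obtain ⟨y, hy, y', hy', hyy', hnyy'⟩ : ∃ y ∈ T, ∃ y' ∈ T, y ≠ y' ∧ ¬ G.und y y' := by
    simpa [Set.Pairwise] using hcomp
  obtain ⟨z, hz, hzy, hnyz, hzs⟩ := hT y hy y' hy' hyy' hnyy'
  by_cases hzC : z ∈ C
  · -- a vertex not adjacent to `z ∈ C` lies outside the clique `C`
    obtain ⟨z', hz', hz'z, hnzz', hz's⟩ := hT z hz y hy hzy fun h => hnyz (symm h)
    exact ⟨z', hz', fun hz'C => hnzz' (hC hzC hz'C hz'z.symm), hz's⟩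
  · exact ⟨z, hz, hzC, hzs⟩

/-- Dirac's lemma, in the form that carries the induction. -/
theorem UndChordal.exists_isSimplicialIn_not_und [Finite V] (hG : G.UndChordal) (S : Set V) :
    ∀ a ∈ S, ∀ b ∈ S, a ≠ b → ¬ G.und a b →
      ∃ z ∈ S, z ≠ a ∧ ¬ G.und a z ∧ G.IsSimplicialIn S z := by
  induction hn : S.ncard using Nat.strong_induction_on generalizing S with
  | _ n ih =>
  intro a ha b hb hab hnab
  -- `B` is the component of `b` outside the closed neighbourhood of `a`, `C` its boundary.
  set R : Set V := {s ∈ S | s ≠ a ∧ ¬ G.und a s}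
  set B : Set V := {s | Relation.ReflTransGen (G.induce R).und b s}
  set C : Set V := {c ∈ S | c ≠ a ∧ G.und a c ∧ ∃ s ∈ B, G.und s c}
  have hBR : B ⊆ R := fun s hs => by
    rcases hs.cases_tail with rfl | ⟨_, _, h⟩
    exacts [⟨hb, hab.symm, hnab⟩, h.2.2]
  have hnbr : ∀ s ∈ B, ∀ t ∈ S, G.und s t → t ∈ B ∪ C := by
    intro s hs t ht hst
    by_cases htR : t ∈ R
    · exact Or.inl (Relation.ReflTransGen.tail hs ⟨hst, hBR hs, htR⟩)
    have hta : t ≠ a := fun h => (hBR hs).2.2 (symm (h ▸ hst))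
    exact Or.inr ⟨ht, hta, by_contra fun hat => htR ⟨ht, hta, hat⟩, s, hs, hst⟩
  have hC : C.Pairwise G.und := by
    rintro v ⟨-, hva, hav, sv, hsv, hsvv⟩ w ⟨-, hwa, haw, sw, hsw, hsww⟩ hvw
    have hpath : Relation.ReflTransGen (G.induce R).und sv sw := (symm hsv).trans hsw
    exact hG.und_of_reflTransGen (fun x hx => hx.2) hav haw hva hwa hvw (symm hsvv) hsww
      (hBR hsv) hpath
  have hlt : (B ∪ C).ncard < n := by
    refine hn ▸ Set.ncard_lt_ncard ((Set.ssubset_iff_of_subset ?_).2 ⟨a, ha, ?_⟩)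
    · exact Set.union_subset (fun s hs => (hBR hs).1) fun c hc => hc.1
    · rintro (haB | haC)
      exacts [(hBR haB).2.1 rfl, haC.2.1 rfl]
  obtain ⟨z, hzT, hzC, hz⟩ := exists_isSimplicialIn_not_mem (ih _ hlt (B ∪ C) rfl) hC
    (Or.inl .refl) fun hbC => hnab hbC.2.2.1
  have hzB : z ∈ B := hzT.resolve_right hzC
  exact ⟨z, (hBR hzB).1, (hBR hzB).2.1, (hBR hzB).2.2, hz.mono (hnbr z hzB)⟩

theorem UndChordal.exists_isSimplicialIn [Finite V] (hG : G.UndChordal) {S : Set V}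
    (hS : S.Nonempty) : ∃ x ∈ S, G.IsSimplicialIn S x := by
  obtain ⟨b, hb⟩ := hS
  obtain ⟨x, hx, -, hxs⟩ :=
    exists_isSimplicialIn_not_mem (hG.exists_isSimplicialIn_not_und S) (Set.pairwise_empty _) hb id
  exact ⟨x, hx, hxs⟩

theorem adj_symm {a b : V} (h : G.adj a b) : G.adj b a := by
  rcases h with h | h | h | h
  exacts [Or.inr (Or.inl h), Or.inl h, Or.inr (Or.inr (Or.inl (G.bi_symm _ _ h))),
    Or.inr (Or.inr (Or.inr (symm h)))]

theorem adj_induce {S : Set V} {a b : V} :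
    (G.induce S).adj a b ↔ G.adj a b ∧ a ∈ S ∧ b ∈ S := by
  simp only [adj, induce]
  tauto

theorem head_induce {S : Set V} {a b : V} :
    (G.induce S).head a b ↔ G.head a b ∧ a ∈ S ∧ b ∈ S := by
  simp only [head, induce]
  tauto

theorem anc_of_anc_induce {S : Set V} {a b : V} (h : (G.induce S).anc a b) : G.anc a b :=
  Relation.ReflTransGen.mono (fun _ _ h => h.1) _ _ h

theorem anc_induce_of_childless {x v t : V} (hx : ∀ z, ¬ G.dir x z) (h : G.anc v t)
    (ht : t ≠ x) : (G.induce {w | w ≠ x}).anc v t := by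
  induction h with
  | refl => exact .refl
  | @tail c d _ hcd ih =>
    have hc : c ≠ x := fun h => hx d (h ▸ hcd)
    exact (ih hc).tail ⟨hcd, hc, ht⟩

theorem Ancestral.induce (hG : G.Ancestral) (S : Set V) : (G.induce S).Ancestral :=
  ⟨fun x y h hyx => hG.1 x y h.1 (anc_of_anc_induce hyx),
    fun x y h hyx => hG.2.1 x y h.1 (anc_of_anc_induce hyx),
    fun x y h z => ⟨fun hz => (hG.2.2 x y h.1 z).1 hz.1, fun hz => (hG.2.2 x y h.1 z).2 hz.1⟩⟩

theorem IsPath.mem_of_induce {S : Set V} {p : List V} (hp : (G.induce S).IsPath p) :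
    ∀ v ∈ p, v ∈ S := by
  obtain ⟨hc, -, hlen⟩ := hp
  match p, hc, hlen with
  | x :: y :: t, hc, _ =>
    exact hc.induction _ _ (fun _ _ h _ => (adj_induce.1 h).2.2)
      fun _ => (adj_induce.1 (isChain_cons_cons.1 hc).1).2.1

theorem colliderAt_induce_iff {S : Set V} {p : List V} {i : ℕ} (hp : ∀ v ∈ p, v ∈ S) :
    (G.induce S).ColliderAt p i ↔ G.ColliderAt p i := by
  have hS : ∀ {k v}, p[k]? = some v → v ∈ S := fun h => hp _ (mem_iff_getElem?.2 ⟨_, h⟩)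
  simp only [ColliderAt, head_induce]
  constructor
  · rintro ⟨a, v, c, ha, hv, hc, hav, hcv⟩
    exact ⟨a, v, c, ha, hv, hc, hav.1, hcv.1⟩
  · rintro ⟨a, v, c, ha, hv, hc, hav, hcv⟩
    exact ⟨a, v, c, ha, hv, hc, ⟨hav, hS ha, hS hv⟩, ⟨hcv, hS hc, hS hv⟩⟩

theorem MConn.of_induce {S : Set V} {p : List V} {Y W : V} {Z : Set V}
    (h : (G.induce S).MConn p Y W Z) : G.MConn p Y W Z := by
  obtain ⟨⟨hp, hY, hW⟩, hint⟩ := h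
  have hcol := fun i => colliderAt_induce_iff (G := G) (i := i) hp.mem_of_induce
  refine ⟨⟨⟨hp.1.imp fun _ _ h => (adj_induce.1 h).1, hp.2⟩, hY, hW⟩, fun i v h1 h2 hv => ?_⟩
  rw [← hcol]
  obtain ⟨hanc, hZ⟩ := hint i v h1 h2 hv
  exact ⟨fun hc => (hanc hc).imp fun _ ⟨ht, h⟩ => ⟨ht, anc_of_anc_induce h⟩, hZ⟩

theorem MConn.induce_of_not_mem {x : V} {p : List V} {Y W : V} {Z : Set V}
    (hx : ∀ z, ¬ G.dir x z) (hxp : x ∉ p) (hxZ : x ∉ Z) (h : G.MConn p Y W Z) :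
    (G.induce {v | v ≠ x}).MConn p Y W Z := by
  obtain ⟨⟨hp, hY, hW⟩, hint⟩ := h
  have hpx : ∀ v ∈ p, v ≠ x := fun v hv h => hxp (h ▸ hv)
  have hcol := fun i => colliderAt_induce_iff (G := G) (S := {v | v ≠ x}) (i := i) hpx
  refine ⟨⟨⟨?_, hp.2⟩, hY, hW⟩, fun i v h1 h2 hv => ?_⟩
  · exact hp.1.imp_of_mem_imp fun a b ha hb h => adj_induce.2 ⟨h, hpx a ha, hpx b hb⟩
  rw [hcol]
  obtain ⟨hanc, hZ⟩ := hint i v h1 h2 hv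
  refine ⟨fun hc => ?_, hZ⟩
  obtain ⟨t, ht, htv⟩ := hanc hc
  have htx : t ≠ x := by
    rintro rfl
    rcases ht with (rfl | rfl) | ht
    exacts [hxp (mem_of_mem_head? hY), hxp (mem_of_getLast? hW), hxZ ht]
  exact ⟨t, ht, anc_induce_of_childless hx htv htx⟩

theorem mconn_iff_of_forall_not_head (hG : ∀ a b, ¬ G.head a b) {p : List V} {Y W : V}
    {Z : Set V} :
    G.MConn p Y W Z ↔ G.IsPathBetween p Y W ∧ ∀ v ∈ p, v ≠ Y → v ≠ W → v ∉ Z := by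
  have hcol : ∀ i, ¬ G.ColliderAt p i := fun i ⟨a, v, _, _, _, _, hav, _⟩ => hG a v hav
  refine ⟨fun ⟨hp, hint⟩ => ⟨hp, fun v hv hvY hvW => ?_⟩,
    fun ⟨hp, hZ⟩ => ⟨hp, fun i v h1 h2 hi => ⟨fun h => absurd h (hcol i), fun _ => ?_⟩⟩⟩
  · obtain ⟨i, h1, h2, hi⟩ :=
      (hp.1.2.1.exists_internal_getElem?_iff hp.2.1 hp.2.2).2 ⟨hv, hvY, hvW⟩
    exact (hint i v h1 h2 hi).2 (hcol i)
  · obtain ⟨hv, hvY, hvW⟩ :=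
      (hp.1.2.1.exists_internal_getElem?_iff hp.2.1 hp.2.2).1 ⟨i, h1, h2, hi⟩
    exact hZ v hv hvY hvW

theorem IsPathBetween.append_of_append_cons {l₁ l₂ : List V} {x Y W : V}
    (h : G.IsPathBetween (l₁ ++ x :: l₂) Y W) (hY : Y ≠ x) (hW : W ≠ x)
    (hx : ∀ a ∈ l₁.getLast?, ∀ c ∈ l₂.head?, a ≠ c → G.adj a x → G.adj x c → G.adj a c) :
    G.IsPathBetween (l₁ ++ l₂) Y W ∧ x ∉ l₁ ++ l₂ := by
  obtain ⟨⟨hc, hnd, -⟩, hpY, hpW⟩ := h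
  replace hc : (l₁ ++ x :: l₂).IsChain G.adj := hc
  have hl₁ : l₁ ≠ [] := by
    rintro rfl
    exact hY (Option.some.inj hpY).symm
  have hl₂ : l₂ ≠ [] := by
    rintro rfl
    exact hW (by simpa using hpW.symm)
  have hdisj : ∀ a ∈ l₁, ∀ b ∈ x :: l₂, a ≠ b := (nodup_append.1 hnd).2.2
  have hxl₂ : x ∉ l₂ := (nodup_cons.1 (nodup_append.1 hnd).2.1).1
  rw [isChain_append, isChain_cons] at hc
  refine ⟨⟨⟨isChain_append.2 ⟨hc.1, hc.2.1.2, fun a ha c hc' => ?_⟩, ?_, ?_⟩, ?_, ?_⟩, ?_⟩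
  · exact hx a ha c hc' (hdisj a (mem_of_getLast? ha) c (mem_cons_of_mem _ (mem_of_mem_head? hc')))
      (hc.2.2 a ha x rfl) (hc.2.1.1 c hc')
  · exact hnd.sublist ((sublist_cons_self x l₂).append_left l₁)
  · simp only [length_append]
    have := length_pos_iff.2 hl₁
    have := length_pos_iff.2 hl₂
    omega
  · rwa [head?_append_of_ne_nil _ hl₁, ← head?_append_of_ne_nil _ hl₁]
  · rw [getLast?_append_of_ne_nil _ hl₂, ← hpW, getLast?_append_of_ne_nil _ (cons_ne_nil _ _)]
    obtain ⟨c, l, rfl⟩ := exists_cons_of_ne_nil hl₂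
    simp [getLast?_cons]
  · rw [mem_append, not_or]
    exact ⟨fun h => hdisj x h x mem_cons_self rfl, hxl₂⟩

theorem removable_of_exists_mconn_not_mem {x : V} (hx : ∀ z, ¬ G.dir x z)
    (h : ∀ p Y W Z, Y ≠ x → W ≠ x → x ∉ Z → G.MConn p Y W Z → ∃ q, x ∉ q ∧ G.MConn q Y W Z) :
    G.Removable x := by
  intro Y W hY hW _ Z hZ
  have hxZ : x ∉ Z := fun h => (hZ h).1 rfl
  refine ⟨fun hsep p hp => hsep p hp.of_induce, fun hsep p hp => ?_⟩
  obtain ⟨q, hxq, hq⟩ := h p Y W Z hY hW hxZ hp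
  exact hsep q (hq.induce_of_not_mem hx hxq hxZ)

theorem Ancestral.removable_of_childless (hG : G.Ancestral) {x : V} (hx : ∀ z, ¬ G.dir x z)
    (hhead : ∃ z, G.head z x) : G.Removable x := by
  have hadj : ∀ a, G.adj a x → G.head a x := by
    rintro a (h | h | h | h)
    · exact Or.inl h
    · exact absurd h (hx a)
    · exact Or.inr h
    · obtain ⟨z, hz⟩ := hhead
      exact absurd hz (not_or.2 (hG.2.2 x a (symm h) z))
  refine removable_of_exists_mconn_not_mem hx fun p Y W Z hY hW hxZ hp => ⟨p, fun hxp => ?_, hp⟩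
  obtain ⟨⟨⟨hc, hnd, -⟩, hpY, hpW⟩, hint⟩ := hp
  obtain ⟨i, h1, h2, hi⟩ :=
    (hnd.exists_internal_getElem?_iff hpY hpW).2 ⟨hxp, hY.symm, hW.symm⟩
  have hpi : p[i] = x := (List.getElem?_eq_some_iff.1 hi).2
  have hcol : G.ColliderAt p i := by
    refine ⟨p[i - 1], x, p[i + 1], getElem?_eq_getElem (by omega), hi, getElem?_eq_getElem h2,
      hadj _ ?_, hadj _ (adj_symm ?_)⟩
    · simpa only [Nat.sub_add_cancel h1, hpi] using hc.getElem (i - 1) (by omega)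
    · simpa [hpi] using hc.getElem i h2
  -- a collider must be an ancestor of `{Y, W} ∪ Z`, but `x` is only an ancestor of itself
  obtain ⟨t, ht, hxt⟩ := (hint i x h1 h2 hi).1 hcol
  obtain rfl : t = x := by
    rcases hxt.cases_head with h | ⟨c, hc, -⟩
    exacts [h.symm, absurd hc (hx c)]
  rcases ht with (h | h) | h
  exacts [hY h.symm, hW h.symm, hxZ h]

theorem removable_of_isSimplicialIn_univ (hG : ∀ a b, ¬ G.head a b) {x : V}
    (hx : G.IsSimplicialIn Set.univ x) : G.Removable x := by
  have hund : ∀ {a b}, G.adj a b → G.und a b := by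
    rintro a b (h | h | h | h)
    exacts [(hG a b (Or.inl h)).elim, (hG b a (Or.inl h)).elim, (hG a b (Or.inr h)).elim, h]
  refine removable_of_exists_mconn_not_mem (fun z h => hG x z (Or.inl h))
    fun p Y W Z hY hW hxZ hp => ?_
  rw [mconn_iff_of_forall_not_head hG] at hp
  by_cases hxp : x ∈ p
  · obtain ⟨l₁, l₂, rfl⟩ := append_of_mem hxp
    obtain ⟨hq, hxq⟩ := hp.1.append_of_append_cons hY hW fun a _ c _ hac hax hxc =>
      Or.inr (Or.inr (Or.inr (hx ⟨trivial, symm (hund hax)⟩ ⟨trivial, hund hxc⟩ hac)))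
    refine ⟨l₁ ++ l₂, hxq, (mconn_iff_of_forall_not_head hG).2 ⟨hq, fun v hv => hp.2 v ?_⟩⟩
    exact (sublist_cons_self x l₂).append_left l₁ |>.subset hv
  · exact ⟨p, hxp, (mconn_iff_of_forall_not_head hG).2 hp⟩

theorem exists_childless_head [Finite V] (hG : ∀ x y, G.dir x y → ¬ G.anc y x)
    (h : ∃ z x, G.head z x) : ∃ x, (∃ z, G.head z x) ∧ ∀ c, ¬ G.dir x c := by
  let r : V → V → Prop := fun a b => Relation.TransGen G.dir b a
  have : IsTrans V r := ⟨fun _ _ _ hab hbc => hbc.trans hab⟩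
  have : Std.Irrefl r := ⟨fun a ha => by
    obtain ⟨c, hac, hca⟩ := Relation.TransGen.head'_iff.1 ha
    exact hG a c hac hca⟩
  obtain ⟨z, x, hzx⟩ := h
  obtain ⟨x, hx, hmin⟩ :=
    (Finite.wellFounded_of_trans_of_irrefl r).has_min {x | ∃ z, G.head z x} ⟨x, z, hzx⟩
  exact ⟨x, hx, fun c hc => hmin c ⟨x, Or.inl hc⟩ (.single hc)⟩

end MixedGraph

open MixedGraph in
/-- if the edge-induced subgraph of a MAG `M` over its
undirected edges is chordal, then every induced subgraph of `M` on a nonempty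
vertex set contains a removable vertex. -/
theorem stmt16 {V : Type*} [Fintype V] (M : MixedGraph V) (hM : M.IsMAG)
    (hchordal : M.UndChordal) :
    ∀ S : Set V, S.Nonempty → ∃ x ∈ S, (M.induce S).Removable x := by
  intro S hS
  have hMS := hM.1.induce S
  by_cases hhead : ∃ z x, (M.induce S).head z x
  · obtain ⟨x, ⟨z, hzx⟩, hx⟩ := exists_childless_head hMS.1 hhead
    exact ⟨x, (head_induce.1 hzx).2.2, hMS.removable_of_childless hx ⟨z, hzx⟩⟩
  · simp only [not_exists] at hhead
    obtain ⟨x, hxS, hx⟩ := hchordal.exists_isSimplicialIn hS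
    exact ⟨x, hxS, removable_of_isSimplicialIn_univ hhead hx.induce⟩
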